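/- Let f : ℝⁿ → ℝ be a C¹-smooth function whose gradient is Lipschitz continuous with constant L > 0, and let {x^k}, {g^k} ⊂ ℝⁿ satisfy x^{k+1} = x^k − (1/L)g^k and ‖g^k − ∇f(x^k)‖ ≤ ν‖g^k‖ for all k, where 0 ≤ ν < 1/2. Assume that ∇f(x^k) ≠ 0 for all k, that x̄ is an accumulation point of {x^k}, and that f satisfies the KL property at x̄. Then x^k → x̄ as k → ∞. -/

import Mathlib

open Filter Topology MeasureTheory
open scoped RealInnerProductSpace ENNReal

section aux

lemma Phi_nonneg {η : ℝ} {ψ : ℝ → ℝ}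
    (hψpos : ∀ t ∈ Set.Ioo (0:ℝ) η, 0 < ψ t)
    {s : ℝ} (hs : s < η) :
    0 ≤ ∫ t in Set.Ioc 0 s, 1 / ψ t := by
  apply setIntegral_nonneg measurableSet_Ioc
  intro t ht
  exact le_of_lt (one_div_pos.2 (hψpos t ⟨ht.1, lt_of_le_of_lt ht.2 hs⟩))

lemma Phi_lower {η : ℝ} {ψ : ℝ → ℝ} (hψmono : MonotoneOn ψ (Set.Ioo 0 η))
    (hψpos : ∀ t ∈ Set.Ioo (0:ℝ) η, 0 < ψ t)
    (hψint : IntegrableOn (fun t => 1 / ψ t) (Set.Ioo 0 η))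
    {b a : ℝ} (hb : 0 < b) (hba : b ≤ a) (ha : a < η) :
    (a - b) * (1 / ψ a) ≤ (∫ t in Set.Ioc 0 a, 1 / ψ t) - ∫ t in Set.Ioc 0 b, 1 / ψ t := by
  have hsub : Set.Ioc 0 a ⊆ Set.Ioo 0 η := fun t ht => ⟨ht.1, lt_of_le_of_lt ht.2 ha⟩
  have hsub2 : Set.Ioc 0 b ⊆ Set.Ioo 0 η := fun t ht =>
    ⟨ht.1, lt_of_le_of_lt ht.2 (lt_of_le_of_lt hba ha)⟩
  have hsub3 : Set.Ioc b a ⊆ Set.Ioo 0 η := fun t ht => ⟨hb.trans ht.1, lt_of_le_of_lt ht.2 ha⟩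
  have hunion : Set.Ioc (0:ℝ) b ∪ Set.Ioc b a = Set.Ioc 0 a := Set.Ioc_union_Ioc_eq_Ioc hb.le hba
  have hsplit : (∫ t in Set.Ioc 0 a, 1 / ψ t)
      = (∫ t in Set.Ioc 0 b, 1 / ψ t) + ∫ t in Set.Ioc b a, 1 / ψ t := by
    rw [← hunion]
    exact setIntegral_union (Set.Ioc_disjoint_Ioc_of_le le_rfl) measurableSet_Ioc
      (hψint.mono_set hsub2) (hψint.mono_set hsub3)
  rw [hsplit]
  have hconst : ∫ t in Set.Ioc b a, (1 / ψ a) = (a - b) * (1 / ψ a) := by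
    rw [setIntegral_const]
    rw [Real.volume_real_Ioc_of_le hba, smul_eq_mul]
  have hmono : ∫ t in Set.Ioc b a, (1 / ψ a) ≤ ∫ t in Set.Ioc b a, 1 / ψ t := by
    apply setIntegral_mono_on (integrableOn_const measure_Ioc_lt_top.ne)
      (hψint.mono_set hsub3) measurableSet_Ioc
    intro t ht
    exact one_div_le_one_div_of_le (hψpos t (hsub3 ht))
      (hψmono (hsub3 ht) ⟨hb.trans_le hba, ha⟩ ht.2)
  linarith [hconst ▸ hmono]

lemma Phi_tendsto {η : ℝ} (hη : 0 < η) {ψ : ℝ → ℝ}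
    (hψint : IntegrableOn (fun t => 1 / ψ t) (Set.Ioo 0 η))
    {a : ℕ → ℝ} (ha : Tendsto a atTop (𝓝 0)) :
    Tendsto (fun k => ∫ t in Set.Ioc 0 (a k), 1 / ψ t) atTop (𝓝 0) := by
  have hμ : Tendsto (fun k => (volume.restrict (Set.Ioo (0:ℝ) η)) (Set.Ioc 0 (a k)))
      atTop (𝓝 0) := by
    have hub : ∀ k, (volume.restrict (Set.Ioo (0:ℝ) η)) (Set.Ioc 0 (a k))
        ≤ ENNReal.ofReal (a k) := by
      intro k
      calc (volume.restrict (Set.Ioo (0:ℝ) η)) (Set.Ioc 0 (a k))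
          ≤ volume (Set.Ioc (0:ℝ) (a k)) := Measure.restrict_apply_le _ _
        _ = ENNReal.ofReal (a k) := by rw [Real.volume_Ioc, sub_zero]
    have h2 : Tendsto (fun k => ENNReal.ofReal (a k)) atTop (𝓝 0) := by
      rw [show (0 : ℝ≥0∞) = ENNReal.ofReal 0 by simp]
      exact (ENNReal.continuous_ofReal.tendsto 0).comp ha
    exact tendsto_of_tendsto_of_tendsto_of_le_of_le tendsto_const_nhds h2
      (fun k => zero_le) hub
  have h3 := hψint.tendsto_setIntegral_nhds_zero hμ
  apply h3.congr'
  filter_upwards [ha.eventually (eventually_lt_nhds hη)] with k hk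
  rw [Measure.restrict_restrict measurableSet_Ioc]
  congr 1
  rcases le_or_gt (a k) 0 with h | h
  · rw [Set.Ioc_eq_empty (by linarith), Set.empty_inter]
  · have hss : Set.Ioc 0 (a k) ⊆ Set.Ioo 0 η := fun t ht => ⟨ht.1, lt_of_le_of_lt ht.2 hk⟩
    rw [Set.inter_eq_left.2 hss]

end aux

lemma grad_apply {E : Type*} [NormedAddCommGroup E] [InnerProductSpace ℝ E] [CompleteSpace E]
    (f : E → ℝ) (hf : ContDiff ℝ 1 f) (p v : E) :
    fderiv ℝ f p v = ⟪gradient f p, v⟫ := by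
  have h := ((hf.differentiable one_ne_zero) p).hasGradientAt
  rw [h.hasFDerivAt.fderiv]
  simp [InnerProductSpace.toDual_apply_apply]

lemma grad_cont {E : Type*} [NormedAddCommGroup E] [InnerProductSpace ℝ E] [CompleteSpace E]
    (f : E → ℝ) (hf : ContDiff ℝ 1 f) : Continuous (gradient f) := by
  have : gradient f = fun p => (InnerProductSpace.toDual ℝ E).symm (fderiv ℝ f p) := by
    ext p
    have h := ((hf.differentiable one_ne_zero) p).hasGradientAt
    rw [h.hasFDerivAt.fderiv]; exact ((InnerProductSpace.toDual ℝ E).symm_apply_apply _).symm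
  rw [this]
  exact (InnerProductSpace.toDual ℝ E).symm.continuous.comp (hf.continuous_fderiv one_ne_zero)

lemma descent_lemma {E : Type*} [NormedAddCommGroup E] [InnerProductSpace ℝ E] [CompleteSpace E]
    (f : E → ℝ) (hf : ContDiff ℝ 1 f) (L : ℝ)
    (hlip : ∀ x y : E, ‖gradient f x - gradient f y‖ ≤ L * ‖x - y‖) (x v : E) :
    f (x + v) ≤ f x + ⟪gradient f x, v⟫ + L / 2 * ‖v‖ ^ 2 := by
  have hline : ∀ t : ℝ, HasDerivAt (fun s : ℝ => f (x + s • v)) ⟪gradient f (x + t • v), v⟫ t := by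
    intro t
    have h1 : HasDerivAt (fun s : ℝ => x + s • v) v t := by
      simpa using (HasDerivAt.const_add x ((hasDerivAt_id t).smul_const v))
    have h2 := ((hf.differentiable one_ne_zero) (x + t • v)).hasFDerivAt
    have := h2.comp_hasDerivAt t h1
    rw [grad_apply f hf] at this; exact this
  have hcont : Continuous fun t : ℝ => ⟪gradient f (x + t • v), v⟫ := by
    exact (((grad_cont f hf).comp (by continuity)).inner continuous_const)
  have hftc : f (x + v) - f x = ∫ t in (0:ℝ)..1, ⟪gradient f (x + t • v), v⟫ := by
    have := intervalIntegral.integral_eq_sub_of_hasDerivAt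
      (f := fun s : ℝ => f (x + s • v)) (a := (0:ℝ)) (b := 1)
      (fun t _ => hline t) (hcont.intervalIntegrable 0 1)
    simp at this
    rw [← this]; simp only [grad_apply f hf]
  have hbound : ∫ t in (0:ℝ)..1, ⟪gradient f (x + t • v), v⟫
      ≤ ∫ t in (0:ℝ)..1, (⟪gradient f x, v⟫ + L * t * ‖v‖ ^ 2) := by
    apply intervalIntegral.integral_mono_on (by norm_num)
      (hcont.intervalIntegrable 0 1)
      (by apply Continuous.intervalIntegrable; continuity)
    intro t ht
    have h1 : ⟪gradient f (x + t • v) - gradient f x, v⟫ ≤ L * t * ‖v‖ ^ 2 := by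
      calc ⟪gradient f (x + t • v) - gradient f x, v⟫
          ≤ ‖gradient f (x + t • v) - gradient f x‖ * ‖v‖ := real_inner_le_norm _ _
        _ ≤ (L * ‖(x + t • v) - x‖) * ‖v‖ := by
            gcongr; exact hlip _ _
        _ = L * (|t| * ‖v‖) * ‖v‖ := by rw [add_sub_cancel_left, norm_smul]; simp
        _ = L * t * ‖v‖ ^ 2 := by rw [abs_of_nonneg ht.1]; ring
    have := inner_sub_left (𝕜 := ℝ) (gradient f (x + t • v)) (gradient f x) v
    linarith [h1, this.symm.le, this.le]
  have hint : ∫ t in (0:ℝ)..1, (⟪gradient f x, v⟫ + L * t * ‖v‖ ^ 2)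
      = ⟪gradient f x, v⟫ + L / 2 * ‖v‖ ^ 2 := by
    have heq : (fun t : ℝ => ⟪gradient f x, v⟫ + L * t * ‖v‖ ^ 2)
        = fun t : ℝ => ⟪gradient f x, v⟫ + (L * ‖v‖ ^ 2) * t := by ext t; ring
    rw [show ∫ t in (0:ℝ)..1, (⟪gradient f x, v⟫ + L * t * ‖v‖ ^ 2)
        = ∫ t in (0:ℝ)..1, (⟪gradient f x, v⟫ + (L * ‖v‖ ^ 2) * t) by rw [heq],
      intervalIntegral.integral_add (by apply Continuous.intervalIntegrable; continuity)
        (by apply Continuous.intervalIntegrable; continuity),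
      intervalIntegral.integral_const, intervalIntegral.integral_const_mul, integral_id]
    norm_num
    ring
  linarith [hftc, hbound, hint.le, hint.ge]

/-- Global convergence of the iterates of the inexact gradient
method under the KL property at an accumulation point. -/
theorem inexact_gradient_method_convergence_under_KL {n : ℕ}
    (f : EuclideanSpace ℝ (Fin n) → ℝ) (hf : ContDiff ℝ 1 f)
    (L : ℝ) (hL : 0 < L)
    (hlip : ∀ x y : EuclideanSpace ℝ (Fin n),
      ‖gradient f x - gradient f y‖ ≤ L * ‖x - y‖)
    (x g : ℕ → EuclideanSpace ℝ (Fin n)) (ν : ℝ) (hν0 : 0 ≤ ν) (hν : ν < 1 / 2)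
    (hiter : ∀ k : ℕ, x (k + 1) = x k - (1 / L) • g k)
    (herr : ∀ k : ℕ, ‖g k - gradient f (x k)‖ ≤ ν * ‖g k‖)
    (hgrad : ∀ k : ℕ, gradient f (x k) ≠ 0)
    (xbar : EuclideanSpace ℝ (Fin n))
    (hacc : ∃ φ : ℕ → ℕ, StrictMono φ ∧ Tendsto (fun k => x (φ k)) atTop (𝓝 xbar))
    (hKL : ∃ η > (0 : ℝ), ∃ U ∈ 𝓝 xbar, ∃ ψ : ℝ → ℝ,
      MonotoneOn ψ (Set.Ioo 0 η) ∧ (∀ t ∈ Set.Ioo (0 : ℝ) η, 0 < ψ t) ∧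
      IntegrableOn (fun t => 1 / ψ t) (Set.Ioo 0 η) ∧
      ∀ y ∈ U, f xbar < f y → f y < f xbar + η → ψ (f y - f xbar) ≤ ‖gradient f y‖) :
    Tendsto x atTop (𝓝 xbar) := by
  have hν2 : (0:ℝ) < 1/2 - ν := by linarith
  have hν1 : (0:ℝ) < 1 + ν := by linarith
  have hLinv : (0:ℝ) < 1/L := by positivity
  -- g k is never zero
  have hgnz : ∀ k, g k ≠ 0 := by
    intro k hk
    have h := herr k
    rw [hk] at h
    simp only [zero_sub, norm_neg, norm_zero, mul_zero] at h
    exact hgrad k (norm_le_zero_iff.1 h)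
  have hgpos : ∀ k, 0 < ‖g k‖ := fun k => norm_pos_iff.2 (hgnz k)
  -- sufficient decrease
  have hdesc : ∀ k, f (x (k+1)) + (1/2 - ν)/L * ‖g k‖^2 ≤ f (x k) := by
    intro k
    have hv : x (k+1) = x k + (-(1/L) • g k) := by rw [hiter k]; module
    have h := descent_lemma f hf L hlip (x k) (-(1/L) • g k)
    rw [← hv] at h
    have hip : ⟪gradient f (x k), -(1/L) • g k⟫ = -(1/L) * ⟪gradient f (x k), g k⟫ :=
      real_inner_smul_right _ _ _
    have hcs : |⟪gradient f (x k) - g k, g k⟫| ≤ ‖gradient f (x k) - g k‖ * ‖g k‖ :=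
      abs_real_inner_le_norm _ _
    have hnrm : ‖gradient f (x k) - g k‖ ≤ ν * ‖g k‖ := by rw [norm_sub_rev]; exact herr k
    have hGnn : (0:ℝ) ≤ ‖g k‖ := norm_nonneg _
    have hcs2 : ‖gradient f (x k) - g k‖ * ‖g k‖ ≤ ν * ‖g k‖ * ‖g k‖ :=
      mul_le_mul_of_nonneg_right hnrm hGnn
    have hexp : ⟪gradient f (x k), g k⟫
        = ⟪gradient f (x k) - g k, g k⟫ + ‖g k‖^2 := by
      rw [inner_sub_left, real_inner_self_eq_norm_sq]; ring
    have hI : (1 - ν) * ‖g k‖^2 ≤ ⟪gradient f (x k), g k⟫ := by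
      have := abs_le.1 hcs
      nlinarith
    have hns : ‖-(1/L) • g k‖^2 = (1/L)^2 * ‖g k‖^2 := by
      rw [norm_smul, Real.norm_eq_abs, abs_neg, abs_of_pos hLinv, mul_pow]
    have hImul : (1/L) * ((1 - ν) * ‖g k‖^2) ≤ (1/L) * ⟪gradient f (x k), g k⟫ :=
      mul_le_mul_of_nonneg_left hI hLinv.le
    have hsq : L/2 * ((1/L)^2 * ‖g k‖^2) = 1/2 * (1/L) * ‖g k‖^2 := by
      field_simp
    rw [hip, hns, hsq] at h
    have e1 : (1/2 - ν)/L * ‖g k‖^2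
        = 1/L * ((1-ν)*‖g k‖^2) - 1/2 * (1/L) * ‖g k‖^2 := by ring
    linarith [h, hImul, e1]
  -- strict decrease of values
  have hmono : StrictAnti (fun k => f (x k)) := by
    apply strictAnti_nat_of_succ_lt
    intro k
    have h1 := hdesc k
    have h2 : 0 < (1/2 - ν)/L * ‖g k‖^2 := mul_pos (div_pos hν2 hL) (pow_pos (hgpos k) 2)
    show f (x (k+1)) < f (x k)
    linarith
  obtain ⟨φ, hφm, hφx⟩ := hacc
  have hfc : Continuous f := hf.continuous
  have hfsub : Tendsto (fun i => f (x (φ i))) atTop (𝓝 (f xbar)) := (hfc.tendsto xbar).comp hφx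
  have hge : ∀ k, f xbar ≤ f (x k) := by
    intro k
    apply le_of_tendsto hfsub
    filter_upwards [hφm.tendsto_atTop.eventually_ge_atTop k] with i hi
    exact hmono.antitone hi
  have hgt : ∀ k, f xbar < f (x k) :=
    fun k => lt_of_le_of_lt (hge (k+1)) (hmono (Nat.lt_succ_self k))
  have hftend : Tendsto (fun k => f (x k)) atTop (𝓝 (f xbar)) := by
    have hbdd : BddBelow (Set.range fun k => f (x k)) := by
      refine ⟨f xbar, ?_⟩
      rintro y ⟨k, rfl⟩
      exact hge k
    have h1 := tendsto_atTop_ciInf hmono.antitone hbdd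
    have h2 := h1.comp hφm.tendsto_atTop
    exact (tendsto_nhds_unique h2 hfsub) ▸ h1
  have ha_pos : ∀ k, 0 < f (x k) - f xbar := fun k => sub_pos.2 (hgt k)
  have ha_tend : Tendsto (fun k => f (x k) - f xbar) atTop (𝓝 0) := by
    simpa using hftend.sub (tendsto_const_nhds (x := f xbar))
  have ha_anti : ∀ m k : ℕ, f (x (m + k)) - f xbar ≤ f (x m) - f xbar := by
    intro m k
    have := hmono.antitone (Nat.le_add_right m k)
    simpa using this
  obtain ⟨η, hη, U, hU, ψ, hψmono, hψpos, hψint, hKLi⟩ := hKL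
  obtain ⟨ρ, hρ, hρU⟩ := Metric.mem_nhds_iff.1 hU
  set Φ : ℝ → ℝ := fun s => ∫ t in Set.Ioc 0 s, 1 / ψ t with hΦdef
  set B : ℝ := (1 + ν) / (1/2 - ν) with hBdef
  have hB : 0 < B := div_pos hν1 hν2
  -- key per-step estimate
  have hkey : ∀ k, x k ∈ Metric.ball xbar ρ → f (x k) - f xbar < η →
      ‖x (k+1) - x k‖ ≤ B * (Φ (f (x k) - f xbar) - Φ (f (x (k+1)) - f xbar)) := by
    intro k hball hlt
    have hak : f (x k) - f xbar ∈ Set.Ioo 0 η := ⟨ha_pos k, hlt⟩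
    have hP : 0 < ψ (f (x k) - f xbar) := hψpos _ hak
    have hKLk : ψ (f (x k) - f xbar) ≤ ‖gradient f (x k)‖ :=
      hKLi (x k) (hρU hball) (hgt k) (by linarith)
    have hgb : ‖gradient f (x k)‖ ≤ (1 + ν) * ‖g k‖ := by
      calc ‖gradient f (x k)‖ = ‖g k - (g k - gradient f (x k))‖ := by
            congr 1; abel
        _ ≤ ‖g k‖ + ‖g k - gradient f (x k)‖ := norm_sub_le _ _
        _ ≤ ‖g k‖ + ν * ‖g k‖ := by linarith [herr k]
        _ = (1 + ν) * ‖g k‖ := by ring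
    have hdec : f (x (k+1)) ≤ f (x k) := by
      have h2 : 0 ≤ (1/2 - ν)/L * ‖g k‖^2 := by positivity
      linarith [hdesc k]
    have hlow := Phi_lower hψmono hψpos hψint (ha_pos (k+1)) (by linarith) hlt
    have hstep : ‖x (k+1) - x k‖ = (1/L) * ‖g k‖ := by
      rw [hiter k, sub_sub_cancel_left, norm_neg, norm_smul, Real.norm_eq_abs,
        abs_of_pos hLinv]
    -- abbreviations
    set G := ‖g k‖ with hGdef
    set P := ψ (f (x k) - f xbar) with hPdef
    set Δ := (f (x k) - f xbar) - (f (x (k+1)) - f xbar) with hΔdef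
    have hΔc : (1/2 - ν)/L * G^2 ≤ Δ := by
      rw [hΔdef]
      have := hdesc k
      linarith
    have h1 : (1/L) * G ≤ B * Δ / P := by
      rw [le_div_iff₀ hP]
      have h2 : (1/L) * G * P ≤ (1/L) * G * ((1 + ν) * G) := by
        have : P ≤ (1 + ν) * G := le_trans hKLk hgb
        have hnn : 0 ≤ (1/L) * G := by positivity
        exact mul_le_mul_of_nonneg_left this hnn
      have h3 : (1/L) * G * ((1 + ν) * G) = B * ((1/2 - ν)/L * G^2) := by
        have hBc : B * (1/2 - ν) = 1 + ν := by
          rw [hBdef]; exact div_mul_cancel₀ _ hν2.ne'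
        linear_combination (-(G^2/L)) * hBc
      have h4 : B * ((1/2 - ν)/L * G^2) ≤ B * Δ := mul_le_mul_of_nonneg_left hΔc hB.le
      linarith
    have h5 : B * Δ / P ≤ B * (Φ (f (x k) - f xbar) - Φ (f (x (k+1)) - f xbar)) := by
      have h6 : Δ * (1 / P) ≤ Φ (f (x k) - f xbar) - Φ (f (x (k+1)) - f xbar) := hlow
      have h7 : B * Δ / P = B * (Δ * (1 / P)) := by field_simp
      rw [h7]
      exact mul_le_mul_of_nonneg_left h6 hB.le
    rw [hstep]
    exact le_trans h1 h5
  have hΦt : Tendsto (fun k => Φ (f (x k) - f xbar)) atTop (𝓝 0) :=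
    Phi_tendsto hη hψint ha_tend
  -- trapping induction
  have hmain : ∀ ε : ℝ, 0 < ε → ε ≤ ρ → ∀ m, ‖x m - xbar‖ < ε/4 →
      B * Φ (f (x m) - f xbar) < ε/4 → f (x m) - f xbar < η →
      ∀ k, ‖x (m + k) - xbar‖
        ≤ ε/4 + B * (Φ (f (x m) - f xbar) - Φ (f (x (m + k)) - f xbar)) := by
    intro ε hε hερ m hm1 hm2 hm3 k
    induction k with
    | zero => simpa using hm1.le
    | succ k ih =>
      have haK : f (x (m + k)) - f xbar < η := lt_of_le_of_lt (ha_anti m k) hm3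
      have hΦmk : 0 ≤ Φ (f (x (m + k)) - f xbar) := Phi_nonneg hψpos haK
      have hBΦ : 0 ≤ B * Φ (f (x (m + k)) - f xbar) := mul_nonneg hB.le hΦmk
      have hms : B * (Φ (f (x m) - f xbar) - Φ (f (x (m + k)) - f xbar))
          = B * Φ (f (x m) - f xbar) - B * Φ (f (x (m + k)) - f xbar) := mul_sub _ _ _
      have hball : x (m + k) ∈ Metric.ball xbar ρ := by
        rw [Metric.mem_ball, dist_eq_norm]
        have : ‖x (m + k) - xbar‖ ≤ ε/4 + B * Φ (f (x m) - f xbar) := by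
          linarith [ih]
        linarith
      have hk := hkey (m + k) hball haK
      have htri : ‖x (m + k + 1) - xbar‖
          ≤ ‖x (m + k + 1) - x (m + k)‖ + ‖x (m + k) - xbar‖ :=
        norm_sub_le_norm_sub_add_norm_sub _ _ _
      have hms2 : B * (Φ (f (x (m + k)) - f xbar) - Φ (f (x (m + k + 1)) - f xbar))
          = B * Φ (f (x (m + k)) - f xbar) - B * Φ (f (x (m + k + 1)) - f xbar) :=
        mul_sub _ _ _
      have hms3 : B * (Φ (f (x m) - f xbar) - Φ (f (x (m + k + 1)) - f xbar))
          = B * Φ (f (x m) - f xbar) - B * Φ (f (x (m + k + 1)) - f xbar) := mul_sub _ _ _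
      show ‖x (m + k + 1) - xbar‖
        ≤ ε/4 + B * (Φ (f (x m) - f xbar) - Φ (f (x (m + k + 1)) - f xbar))
      linarith [ih, hk, htri, hms, hms2, hms3]
  -- conclusion
  rw [Metric.tendsto_atTop]
  intro ε hε
  set ε' := min ε ρ with hε'def
  have hε' : 0 < ε' := lt_min hε hρ
  have h1 : ∀ᶠ k in atTop, B * Φ (f (x k) - f xbar) < ε'/4 := by
    have h := hΦt.const_mul B
    rw [mul_zero] at h
    exact h.eventually_lt_const (by positivity)
  have h2 : ∀ᶠ k in atTop, f (x k) - f xbar < η := ha_tend.eventually_lt_const hη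
  have h3 : ∀ᶠ i in atTop, ‖x (φ i) - xbar‖ < ε'/4 := by
    have := hφx (Metric.ball_mem_nhds xbar (show (0:ℝ) < ε'/4 by positivity))
    filter_upwards [this] with i hi
    rw [← dist_eq_norm]
    exact hi
  have h4 := hφm.tendsto_atTop.eventually (h1.and h2)
  obtain ⟨i, hi3, hi4a, hi4b⟩ := (h3.and h4).exists
  refine ⟨φ i, fun k hk => ?_⟩
  obtain ⟨j, rfl⟩ : ∃ j, k = φ i + j := ⟨k - φ i, by omega⟩
  have hbound := hmain ε' hε' (min_le_right _ _) (φ i) hi3 hi4a hi4b j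
  have haj : f (x (φ i + j)) - f xbar < η := lt_of_le_of_lt (ha_anti (φ i) j) hi4b
  have hΦj : 0 ≤ Φ (f (x (φ i + j)) - f xbar) := Phi_nonneg hψpos haj
  have hBΦj : 0 ≤ B * Φ (f (x (φ i + j)) - f xbar) := mul_nonneg hB.le hΦj
  have hms : B * (Φ (f (x (φ i)) - f xbar) - Φ (f (x (φ i + j)) - f xbar))
      = B * Φ (f (x (φ i)) - f xbar) - B * Φ (f (x (φ i + j)) - f xbar) := mul_sub _ _ _
  rw [dist_eq_norm]
  have hεε : ε' ≤ ε := min_le_left _ _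
  linarith
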